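/- Let K be a symmetric invertible r×r integer matrix all of whose diagonal entries are even, let M ≥ 1 be an integer, and let s ∈ ℤ^r. Set Λ = {u ∈ ℤ^r : M·u ∈ Kℤ^r} and define f : Λ → ℂ by f(u) = exp(2πi·sᵀK⁻¹u)·exp(iπ·M·uᵀK⁻¹u). Then f takes values in the circle group, f(u + Kv) = f(u) for all u ∈ Λ and v ∈ ℤ^r, and f(u + u') = f(u)·f(u') for all u, u' ∈ Λ; hence f induces a group homomorphism from the M-torsion subgroup Λ/Kℤ^r of ℤ^r/Kℤ^r to the circle group of unit complex numbers. -/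

import Mathlib

/-!
Write `f(u) = exp(2πi θ(u))` with `θ(u) = sᵀK⁻¹u + (M/2) uᵀK⁻¹u`; every claim reduces to an
integrality statement about `θ`. Replacing `u` by `u + Kv` adds `s·v + M (u·v + vᵀKv/2)` to `θ`,
an integer since `vᵀKv` is even for symmetric `K` with even diagonal. If `Mu = Kw`, then `θ(u + u')`
exceeds `θ(u) + θ(u')` by the cross term `M uᵀK⁻¹u' = u'·w`. Invariance under `Kℤ^r` lets `f`
descend to `ℤ^r / Kℤ^r`.
-/

noncomputable section

/-- The rational quadratic form `aᵀ K⁻¹ b` (computed over `ℝ`) attached to an integer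
matrix `K`. -/
def qform (r : ℕ) (K : Matrix (Fin r) (Fin r) ℤ) (a b : Fin r → ℤ) : ℝ :=
  ∑ i : Fin r, ∑ j : Fin r,
    (a i : ℝ) * ((K.map (fun n : ℤ => (n : ℝ)))⁻¹ i j) * (b j : ℝ)

/-- The relabeling phase `f(u) = exp(2πi sᵀK⁻¹u) · exp(iπ M uᵀK⁻¹u)`. -/
def phaseF (r : ℕ) (K : Matrix (Fin r) (Fin r) ℤ) (M : ℕ) (s : Fin r → ℤ)
    (u : Fin r → ℤ) : ℂ :=
  Complex.exp (2 * (Real.pi : ℂ) * Complex.I * (qform r K s u : ℝ)) *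
    Complex.exp ((Real.pi : ℂ) * Complex.I * (M : ℂ) * (qform r K u u : ℝ))

/-- The anyon quotient `ℤ^r / K ℤ^r`. -/
abbrev KQuot (r : ℕ) (K : Matrix (Fin r) (Fin r) ℤ) : Type :=
  (Fin r → ℤ) ⧸ LinearMap.range (Matrix.mulVecLin K)

open Matrix Complex Real

section EvenForm

variable {n R : Type*} [LinearOrder n] [CommRing R]

/-- Take `L` to be the strict upper part of `K` plus half of its diagonal. -/
lemma Matrix.IsSymm.exists_eq_add_transpose {K : Matrix n n R} (hK : K.IsSymm)
    (heven : ∀ i, Even (K i i)) : ∃ L : Matrix n n R, K = L + Lᵀ := by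
  choose c hc using heven
  refine ⟨Matrix.of fun i j => if i < j then K i j else if i = j then c i else 0, ?_⟩
  ext i j
  rcases lt_trichotomy i j with hij | rfl | hji
  · simp [hij, hij.not_gt, hij.ne']
  · simp [hc]
  · simp [hji, hji.not_gt, hji.ne', hK.apply i j]

lemma Matrix.IsSymm.even_dotProduct_mulVec_self [Fintype n] {K : Matrix n n R} (hK : K.IsSymm)
    (heven : ∀ i, Even (K i i)) (v : n → R) : Even (v ⬝ᵥ K *ᵥ v) := by
  obtain ⟨L, rfl⟩ := hK.exists_eq_add_transpose heven
  refine ⟨v ⬝ᵥ L *ᵥ v, ?_⟩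
  rw [add_mulVec, dotProduct_add, dotProduct_mulVec v Lᵀ, vecMul_transpose, dotProduct_comm]

end EvenForm

lemma Submodule.exists_comp_mk_eq {R M α : Type*} [Ring R] [AddCommGroup M] [Module R M]
    (p : Submodule R M) (f : M → α) (hf : ∀ u x, x ∈ p → f (u + x) = f u) :
    ∃ F : M ⧸ p → α, ∀ u, F (Submodule.Quotient.mk u) = f u :=
  ⟨Quotient.lift f fun a b hab => by
      simpa using hf b (a - b) ((Submodule.quotientRel_def p).mp hab),
    fun _ => rfl⟩

namespace RelabelingPhase

variable {r : ℕ} {K : Matrix (Fin r) (Fin r) ℤ}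

lemma qform_eq_dotProduct (K : Matrix (Fin r) (Fin r) ℤ) (a b : Fin r → ℤ) :
    qform r K a b = (Int.cast ∘ a) ⬝ᵥ (K.map Int.cast)⁻¹ *ᵥ (Int.cast ∘ b) := by
  simp only [qform, dotProduct, mulVec, Finset.mul_sum, Function.comp_apply]
  exact Finset.sum_congr rfl fun i _ => Finset.sum_congr rfl fun j _ => by ring

lemma qform_add_left (K : Matrix (Fin r) (Fin r) ℤ) (a a' b : Fin r → ℤ) :
    qform r K (a + a') b = qform r K a b + qform r K a' b := by
  simp only [qform, Pi.add_apply, Int.cast_add, add_mul, Finset.sum_add_distrib]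

lemma qform_add_right (K : Matrix (Fin r) (Fin r) ℤ) (a b b' : Fin r → ℤ) :
    qform r K a (b + b') = qform r K a b + qform r K a b' := by
  simp only [qform, Pi.add_apply, Int.cast_add, mul_add, Finset.sum_add_distrib]

lemma qform_nsmul_left (K : Matrix (Fin r) (Fin r) ℤ) (M : ℕ) (a b : Fin r → ℤ) :
    qform r K (M • a) b = M * qform r K a b := by
  simp only [qform, Pi.smul_apply, nsmul_eq_mul, Int.cast_mul, Int.cast_natCast, Finset.mul_sum,
    mul_assoc]

lemma qform_comm (hK : K.IsSymm) (a b : Fin r → ℤ) : qform r K a b = qform r K b a := by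
  have hinv : ((K.map Int.cast)⁻¹ : Matrix (Fin r) (Fin r) ℝ)ᵀ = (K.map Int.cast)⁻¹ := by
    rw [transpose_nonsing_inv, ← transpose_map, hK.eq]
  rw [qform_eq_dotProduct, qform_eq_dotProduct, dotProduct_mulVec, ← hinv, vecMul_transpose,
    dotProduct_comm, hinv]

lemma qform_mulVec_right (hdet : K.det ≠ 0) (a v : Fin r → ℤ) :
    qform r K a (K *ᵥ v) = a ⬝ᵥ v := by
  have hunit : IsUnit (K.map (Int.cast : ℤ → ℝ)).det := by
    rw [← Int.cast_det, isUnit_iff_ne_zero]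
    exact_mod_cast hdet
  have hcast : (Int.cast ∘ (K *ᵥ v) : Fin r → ℝ) = K.map Int.cast *ᵥ (Int.cast ∘ v) :=
    funext (RingHom.map_mulVec (Int.castRingHom ℝ) K v)
  rw [qform_eq_dotProduct, hcast, mulVec_mulVec, nonsing_inv_mul _ hunit, one_mulVec]
  exact (RingHom.map_dotProduct (Int.castRingHom ℝ) a v).symm

def phaseAngle (K : Matrix (Fin r) (Fin r) ℤ) (M : ℕ) (s u : Fin r → ℤ) : ℝ :=
  qform r K s u + M / 2 * qform r K u u

lemma phaseF_eq_exp_phaseAngle (K : Matrix (Fin r) (Fin r) ℤ) (M : ℕ) (s u : Fin r → ℤ) :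
    phaseF r K M s u = exp (2 * π * I * phaseAngle K M s u) := by
  rw [phaseF, ← Complex.exp_add, phaseAngle]
  push_cast
  ring_nf

lemma norm_phaseF (K : Matrix (Fin r) (Fin r) ℤ) (M : ℕ) (s u : Fin r → ℤ) :
    ‖phaseF r K M s u‖ = 1 := by
  rw [phaseF_eq_exp_phaseAngle, ← norm_exp_ofReal_mul_I (2 * π * phaseAngle K M s u)]
  push_cast
  ring_nf

lemma exp_two_pi_I_mul_add_intCast (x : ℝ) (n : ℤ) :
    exp (2 * π * I * ((x + n : ℝ) : ℂ)) = exp (2 * π * I * x) := by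
  push_cast
  rw [mul_add, Complex.exp_add, mul_comm _ (n : ℂ), exp_int_mul_two_pi_mul_I, mul_one]

lemma phaseAngle_add_mulVec (hK : K.IsSymm) (hdet : K.det ≠ 0) (heven : ∀ i, Even (K i i))
    (M : ℕ) (s u v : Fin r → ℤ) :
    ∃ n : ℤ, phaseAngle K M s (u + K *ᵥ v) = phaseAngle K M s u + n := by
  obtain ⟨k, hk⟩ := hK.even_dotProduct_mulVec_self heven v
  refine ⟨s ⬝ᵥ v + M * (u ⬝ᵥ v + k), ?_⟩
  simp only [phaseAngle, qform_add_left, qform_add_right, qform_comm hK (K *ᵥ v) u,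
    qform_mulVec_right hdet, add_dotProduct, dotProduct_comm (K *ᵥ v) v, hk]
  push_cast
  ring

lemma phaseAngle_add (hK : K.IsSymm) (hdet : K.det ≠ 0) (M : ℕ) (s : Fin r → ℤ)
    {u w : Fin r → ℤ} (hu : M • u = K *ᵥ w) (u' : Fin r → ℤ) :
    phaseAngle K M s (u + u') = phaseAngle K M s u + phaseAngle K M s u' + (u' ⬝ᵥ w : ℤ) := by
  have hcross : (M : ℝ) * qform r K u u' = u' ⬝ᵥ w := by
    rw [← qform_nsmul_left, hu, qform_comm hK, qform_mulVec_right hdet]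
  simp only [phaseAngle, qform_add_left, qform_add_right, qform_comm hK u' u]
  linear_combination hcross

lemma phaseF_add_mulVec (hK : K.IsSymm) (hdet : K.det ≠ 0) (heven : ∀ i, Even (K i i))
    (M : ℕ) (s u v : Fin r → ℤ) :
    phaseF r K M s (u + K *ᵥ v) = phaseF r K M s u := by
  obtain ⟨n, hn⟩ := phaseAngle_add_mulVec hK hdet heven M s u v
  rw [phaseF_eq_exp_phaseAngle, phaseF_eq_exp_phaseAngle, hn, exp_two_pi_I_mul_add_intCast]

lemma phaseF_add (hK : K.IsSymm) (hdet : K.det ≠ 0) (M : ℕ) (s : Fin r → ℤ)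
    {u w : Fin r → ℤ} (hu : M • u = K *ᵥ w) (u' : Fin r → ℤ) :
    phaseF r K M s (u + u') = phaseF r K M s u * phaseF r K M s u' := by
  rw [phaseF_eq_exp_phaseAngle, phaseAngle_add hK hdet M s hu, exp_two_pi_I_mul_add_intCast,
    ofReal_add, mul_add, Complex.exp_add, ← phaseF_eq_exp_phaseAngle, ← phaseF_eq_exp_phaseAngle]

lemma mk_mem_torsionBy_iff {M : ℕ} {u : Fin r → ℤ} :
    (Submodule.Quotient.mk u : KQuot r K) ∈ Submodule.torsionBy ℤ (KQuot r K) (M : ℤ) ↔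
      ∃ w, M • u = K *ᵥ w := by
  rw [Submodule.mem_torsionBy_iff, ← Submodule.Quotient.mk_smul, Submodule.Quotient.mk_eq_zero,
    natCast_zsmul]
  exact ⟨fun ⟨w, hw⟩ => ⟨w, hw.symm⟩, fun ⟨w, hw⟩ => ⟨w, hw.symm⟩⟩

end RelabelingPhase

open RelabelingPhase

theorem relabeling_phase_is_homomorphism_general (r : ℕ) (K : Matrix (Fin r) (Fin r) ℤ)
    (hsymm : K.IsSymm) (hdet : K.det ≠ 0) (heven : ∀ i, Even (K i i))
    (M : ℕ) (s : Fin r → ℤ) :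
    (∀ u : Fin r → ℤ, (∃ w : Fin r → ℤ, M • u = K.mulVec w) →
      ‖phaseF r K M s u‖ = 1) ∧
    (∀ u v : Fin r → ℤ, (∃ w : Fin r → ℤ, M • u = K.mulVec w) →
      phaseF r K M s (u + K.mulVec v) = phaseF r K M s u) ∧
    (∀ u u' : Fin r → ℤ, (∃ w : Fin r → ℤ, M • u = K.mulVec w) →
      (∃ w : Fin r → ℤ, M • u' = K.mulVec w) →
      phaseF r K M s (u + u') = phaseF r K M s u * phaseF r K M s u') ∧
    (∃ F : Submodule.torsionBy ℤ (KQuot r K) (M : ℤ) → ℂ,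
      (∀ x, ‖F x‖ = 1) ∧
      (∀ x y, F (x + y) = F x * F y) ∧
      (∀ (u : Fin r → ℤ)
        (hu : (Submodule.Quotient.mk u : KQuot r K) ∈
          Submodule.torsionBy ℤ (KQuot r K) (M : ℤ)),
        F ⟨Submodule.Quotient.mk u, hu⟩ = phaseF r K M s u)) := by
  obtain ⟨F, hF⟩ := (LinearMap.range K.mulVecLin).exists_comp_mk_eq (phaseF r K M s)
    (by rintro u _ ⟨v, rfl⟩; exact phaseF_add_mulVec hsymm hdet heven M s u v)
  refine ⟨fun u _ => norm_phaseF K M s u, fun u v _ => phaseF_add_mulVec hsymm hdet heven M s u v,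
    fun u u' ⟨w, hw⟩ _ => phaseF_add hsymm hdet M s hw u', fun x => F x, ?_, ?_,
    fun u _ => hF u⟩
  · rintro ⟨x, -⟩
    induction x using Submodule.Quotient.induction_on with
    | H u => exact (congrArg norm (hF u)).trans (norm_phaseF K M s u)
  · rintro ⟨x, hx⟩ ⟨y, -⟩
    induction x using Submodule.Quotient.induction_on with | H u => ?_
    induction y using Submodule.Quotient.induction_on with | H u' => ?_
    obtain ⟨w, hw⟩ := mk_mem_torsionBy_iff.mp hx
    change F (Submodule.Quotient.mk u + Submodule.Quotient.mk u') =
      F (Submodule.Quotient.mk u) * F (Submodule.Quotient.mk u')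
    rw [← Submodule.Quotient.mk_add, hF, hF, hF]
    exact phaseF_add hsymm hdet M s hw u'

/-- On `Λ = {u : M u ∈ K ℤ^r}` the phase `f(u) = M_{s,u} θ_u^M` is a unit complex number,
is invariant under `u ↦ u + K v`, and is multiplicative; hence it induces a homomorphism
from the `M`-torsion subgroup of `ℤ^r/Kℤ^r` to the circle group. -/
theorem relabeling_phase_is_homomorphism (r : ℕ) (K : Matrix (Fin r) (Fin r) ℤ)
    (hsymm : K.IsSymm) (hdet : K.det ≠ 0) (heven : ∀ i, Even (K i i))
    (M : ℕ) (hM : 1 ≤ M) (s : Fin r → ℤ) :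
    (∀ u : Fin r → ℤ, (∃ w : Fin r → ℤ, M • u = K.mulVec w) →
      ‖phaseF r K M s u‖ = 1) ∧
    (∀ u v : Fin r → ℤ, (∃ w : Fin r → ℤ, M • u = K.mulVec w) →
      phaseF r K M s (u + K.mulVec v) = phaseF r K M s u) ∧
    (∀ u u' : Fin r → ℤ, (∃ w : Fin r → ℤ, M • u = K.mulVec w) →
      (∃ w : Fin r → ℤ, M • u' = K.mulVec w) →
      phaseF r K M s (u + u') = phaseF r K M s u * phaseF r K M s u') ∧
    (∃ F : Submodule.torsionBy ℤ (KQuot r K) (M : ℤ) → ℂ,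
      (∀ x, ‖F x‖ = 1) ∧
      (∀ x y, F (x + y) = F x * F y) ∧
      (∀ (u : Fin r → ℤ)
        (hu : (Submodule.Quotient.mk u : KQuot r K) ∈
          Submodule.torsionBy ℤ (KQuot r K) (M : ℤ)),
        F ⟨Submodule.Quotient.mk u, hu⟩ = phaseF r K M s u)) :=
  relabeling_phase_is_homomorphism_general r K hsymm hdet heven M s
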